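/- arXiv:1701.00356 — 2 statements merged into one kernel-verified Lean document; each statement's English description precedes it below -/
import Mathlib

section
/- Let X be a T₁ topological space, κ an infinite cardinal, and D a dense subset of the product space X^κ. Suppose X^κ contains a closed discrete subset of cardinality |D|. Then there is a dense subset E of X^κ such that |E| = |D|, the density of E as a subspace equals the density of D as a subspace (d(D) = d(E)), and E is a union of countably many closed discrete subsets of X^κ. -/
open Cardinal Set

universe u

/-- A subset `D` of a topological space is closed discrete iff it is closed and
its subspace topology is discrete. -/
def ClosedDiscrete {X : Type u} [TopologicalSpace X] (D : Set X) : Prop :=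
  IsClosed D ∧ DiscreteTopology D

/-- A space is `e`-separable iff it has a dense set which is a countable union of
closed discrete sets. -/
def ESeparable (X : Type u) [TopologicalSpace X] : Prop :=
  ∃ D : ℕ → Set X, (∀ n, ClosedDiscrete (D n)) ∧ Dense (⋃ n, D n)

/-- The density of a space: the least cardinality of a dense subset. -/
noncomputable def density (X : Type u) [TopologicalSpace X] : Cardinal.{u} :=
  sInf {c | ∃ D : Set X, Dense D ∧ #D = c}

/-- The extent of a space: the supremum of the cardinalities of closed discrete subsets. -/
noncomputable def extent (X : Type u) [TopologicalSpace X] : Cardinal.{u} :=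
  sSup {c | ∃ D : Set X, ClosedDiscrete D ∧ #D = c}

/-! Identify `X^κ` with `(X^κ)^(Option ℕ)`. Choose `M ⊆ D` dense of size `d(D)` and inject
`D × List M` into the closed discrete set `C`. The point coded by `(d, l)` has coordinate `d` at
`none`, the entries of `l` at the first `l.length` natural coordinates, and its code in `C` at all
the others. Points whose list has length `n` form a closed discrete set, because their coordinate
`some n` is an injective image inside `C`. Since a basic open set constrains only finitely many
coordinates, the points with `d ∈ M` are already dense, and there are only `d(D)` of them.
Projecting to the coordinate `none` maps everything onto `D`, which gives `d(D) ≤ d(E)` and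
`|D| ≤ |E|`. -/

open Filter Topology Function

section ClosedDiscrete

variable {Y Z : Type u} [TopologicalSpace Y] [TopologicalSpace Z]

theorem closedDiscrete_iff_disjoint_nhdsNE {S : Set Y} :
    ClosedDiscrete S ↔ ∀ y, Disjoint (𝓝[≠] y) (𝓟 S) := by
  rw [ClosedDiscrete, ← isDiscrete_iff_discreteTopology, isClosed_and_discrete_iff]

theorem ClosedDiscrete.subset {S T : Set Y} (hT : ClosedDiscrete T) (hST : S ⊆ T) :
    ClosedDiscrete S :=
  closedDiscrete_iff_disjoint_nhdsNE.2 fun y =>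
    (closedDiscrete_iff_disjoint_nhdsNE.1 hT y).mono_right (principal_mono.2 hST)

theorem Set.Finite.closedDiscrete [T1Space Y] {S : Set Y} (hS : S.Finite) : ClosedDiscrete S :=
  have : Finite S := hS
  ⟨hS.isClosed, inferInstance⟩

theorem ClosedDiscrete.image_homeomorph {S : Set Y} (hS : ClosedDiscrete S) (φ : Y ≃ₜ Z) :
    ClosedDiscrete (φ '' S) := by
  refine ⟨φ.isClosed_image.2 hS.1, isDiscrete_iff_discreteTopology.1 ?_⟩
  exact (isDiscrete_iff_discreteTopology.2 hS.2).image φ.isInducing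

theorem ClosedDiscrete.of_injOn_image [T1Space Y] {π : Y → Z} (hπ : Continuous π) {A : Set Y}
    (hinj : InjOn π A) (hA : ClosedDiscrete (π '' A)) : ClosedDiscrete A := by
  refine closedDiscrete_iff_disjoint_nhdsNE.2 fun y => ?_
  set T := {a ∈ A | π a = π y}
  have hT : ClosedDiscrete T :=
    (Set.Subsingleton.finite fun a ha b hb => hinj ha.1 hb.1 (ha.2.trans hb.2.symm)).closedDiscrete
  have hU : insert (π y) (π '' A)ᶜ ∈ 𝓝 (π y) :=
    insert_mem_nhds_iff.2 (disjoint_principal_right.1 (closedDiscrete_iff_disjoint_nhdsNE.1 hA _))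
  rw [disjoint_principal_right]
  filter_upwards [nhdsWithin_le_nhds (hπ.continuousAt.preimage_mem_nhds hU),
    disjoint_principal_right.1 (closedDiscrete_iff_disjoint_nhdsNE.1 hT y)] with a haU haT haA
  rcases haU with h | h
  · exact haT ⟨haA, h⟩
  · exact h ⟨a, haA, rfl⟩

end ClosedDiscrete

section Density

variable {Y Z : Type u} [TopologicalSpace Y] [TopologicalSpace Z]

theorem density_le_mk {S : Set Y} (hS : Dense S) : density Y ≤ #S :=
  csInf_le' ⟨S, hS, rfl⟩

theorem exists_dense_mk_eq_density (Y : Type u) [TopologicalSpace Y] :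
    ∃ S : Set Y, Dense S ∧ #S = density Y :=
  csInf_mem (s := {c | ∃ S : Set Y, Dense S ∧ #S = c}) ⟨_, univ, dense_univ, rfl⟩

theorem density_le_of_denseRange {f : Y → Z} (hf : Continuous f) (hfd : DenseRange f) :
    density Z ≤ density Y := by
  obtain ⟨S, hS, hSY⟩ := exists_dense_mk_eq_density Y
  calc density Z ≤ #(f '' S) := density_le_mk (hfd.dense_image hf hS)
    _ ≤ #S := mk_image_le
    _ = density Y := hSY

theorem Homeomorph.density_eq (φ : Y ≃ₜ Z) : density Y = density Z :=
  le_antisymm (density_le_of_denseRange φ.symm.continuous φ.symm.surjective.denseRange)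
    (density_le_of_denseRange φ.continuous φ.surjective.denseRange)

theorem density_le_mk_of_subset_closure {E G : Set Y} (hGE : G ⊆ E) (hEG : E ⊆ closure G) :
    density E ≤ #G := by
  have hdense : Dense ((↑) ⁻¹' G : Set E) := by
    rwa [Subtype.dense_iff, Subtype.image_preimage_coe, inter_eq_self_of_subset_right hGE]
  exact (density_le_mk hdense).trans (mk_preimage_of_injective _ _ Subtype.val_injective)

theorem Dense.infinite [T1Space Y] [Infinite Y] {S : Set Y} (hS : Dense S) : S.Infinite :=
  fun hfin => infinite_univ (hS.closure_eq ▸ hfin.isClosed.closure_eq.symm ▸ hfin)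

end Density

theorem Cardinal.mk_prod_list_eq {α β : Type u} [Infinite β] (h : #β ≤ #α) :
    #(α × List β) = #α := by
  rw [mk_prod, lift_id, lift_id, mk_list_eq_mk]
  exact mul_eq_left ((aleph0_le_mk β).trans h) h (mk_ne_zero β)

section Splice

variable {Y : Type u}

def splice (d : Y) (l : List Y) (y : Y) : Option ℕ → Y
  | none => d
  | some i => l.getD i y

theorem splice_some_length (d : Y) (l : List Y) (y : Y) : splice d l y (some l.length) = y :=
  List.getD_eq_default _ _ le_rfl

variable [TopologicalSpace Y]

theorem tendsto_splice_ofFn (w : Option ℕ → Y) (y : ℕ → Y) :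
    Tendsto (fun n => splice (w none) (List.ofFn fun i : Fin n => w (some i)) (y n)) atTop
      (𝓝 w) := by
  refine tendsto_pi_nhds.2 fun o => ?_
  cases o with
  | none => exact tendsto_const_nhds
  | some i =>
    refine tendsto_const_nhds.congr' ((eventually_gt_atTop i).mono fun n hin => ?_)
    simp [splice, List.getD_eq_getElem?_getD, hin]

theorem dense_range_splice {M : Set Y} (hM : Dense M) (c : M × List M → Y) :
    Dense (range fun q : M × List M => splice (q.1 : Y) (q.2.map (↑)) (c q)) := by
  refine dense_closure.1 ((dense_pi univ fun _ _ => hM).mono fun w hw => ?_)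
  have hwM (o : Option ℕ) : w o ∈ M := hw o (mem_univ o)
  let q (n : ℕ) : M × List M := (⟨w none, hwM none⟩, List.ofFn fun i : Fin n => ⟨w (some i), hwM _⟩)
  refine mem_closure_of_tendsto ((tendsto_splice_ofFn w (c ∘ q)).congr fun n => ?_)
    (Eventually.of_forall fun n => mem_range_self (q n))
  simp [q, List.map_ofFn, comp_def]

theorem ClosedDiscrete.image_splice [T1Space Y] {C : Set Y} (hC : ClosedDiscrete C) {ι : Type*}
    (d : ι → Y) (l : ι → List Y) (c : ι ↪ C) (n : ℕ) :
    ClosedDiscrete ((fun i => splice (d i) (l i) (c i)) '' {i | (l i).length = n}) := by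
  refine .of_injOn_image (continuous_apply (some n)) ?_ (hC.subset ?_)
  · rintro _ ⟨i, rfl, rfl⟩ _ ⟨j, hj, rfl⟩ hij
    dsimp only at hij
    rw [splice_some_length, ← hj, splice_some_length] at hij
    rw [c.injective (Subtype.val_injective hij)]
  · rintro _ ⟨_, ⟨i, rfl, rfl⟩, rfl⟩
    dsimp only
    exact (splice_some_length _ _ _).symm ▸ (c i).2

end Splice

theorem exists_sigmaClosedDiscrete_dense_optionNat_arrow {Y : Type u} [TopologicalSpace Y]
    [T1Space Y] {D C : Set Y} (hDinf : D.Infinite) (hD : Dense D) (hC : ClosedDiscrete C)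
    (hDC : #D ≤ #C) :
    ∃ E : Set (Option ℕ → Y), Dense E ∧ #E = #D ∧ density E = density D ∧
      ∃ F : ℕ → Set (Option ℕ → Y), (∀ n, ClosedDiscrete (F n)) ∧ E = ⋃ n, F n := by
  have : Infinite D := hDinf.to_subtype
  obtain ⟨S, hS, hSD⟩ := exists_dense_mk_eq_density D
  set M : Set Y := (↑) '' S
  have hMD : M ⊆ D := Subtype.coe_image_subset D S
  have hMS : #M = #S := mk_image_eq Subtype.val_injective
  have : Infinite M := infinite_coe_iff.2 (hS.infinite.image Subtype.val_injective.injOn)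
  obtain ⟨e⟩ : Nonempty (D × List M ↪ C) :=
    (le_def _ _).1 ((mk_prod_list_eq (mk_le_mk_of_subset hMD)).trans_le hDC)
  set pt : D × List M → Option ℕ → Y := fun p => splice p.1 (p.2.map (↑)) (e p)
  set G := range fun q : M × List M => pt (⟨q.1, hMD q.1.2⟩, q.2)
  have hG : Dense G := dense_range_splice (hD.denseRange_val.dense_image continuous_subtype_val hS)
    fun q => e (⟨q.1, hMD q.1.2⟩, q.2)
  have hGE : G ⊆ range pt := by
    rintro _ ⟨q, rfl⟩
    exact mem_range_self _
  have hpt_none : ∀ w ∈ range pt, w none ∈ D := by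
    rintro _ ⟨p, rfl⟩
    exact p.1.2
  let ρ : range pt → D := fun w => ⟨w.1 none, hpt_none _ w.2⟩
  have hρc : Continuous ρ := ((continuous_apply none).comp continuous_subtype_val).subtype_mk _
  have hρs : Surjective ρ := fun d => ⟨⟨pt (d, []), mem_range_self _⟩, rfl⟩
  refine ⟨range pt, hG.mono hGE, ?_, ?_, fun n => pt '' {p | (p.2.map ((↑) : M → Y)).length = n},
    hC.image_splice (fun p => p.1) (fun p => p.2.map (↑)) e, ?_⟩
  · exact le_antisymm (mk_range_le.trans_eq (mk_prod_list_eq (mk_le_mk_of_subset hMD)))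
      (mk_le_of_surjective hρs)
  · refine le_antisymm ?_ (density_le_of_denseRange hρc hρs.denseRange)
    calc density (range pt) ≤ #G :=
          density_le_mk_of_subset_closure hGE (hG.closure_eq ▸ subset_univ _)
      _ ≤ #(M × List M) := mk_range_le
      _ = density D := by rw [mk_prod_list_eq le_rfl, hMS, hSD]
  · ext w
    simp

theorem nonempty_homeomorph_optionNat_arrow (X : Type u) [TopologicalSpace X] {ι : Type u}
    (hι : ℵ₀ ≤ #ι) : Nonempty ((Option ℕ → ι → X) ≃ₜ (ι → X)) := by
  obtain ⟨e⟩ : Nonempty (Option ℕ × ι ≃ ι) := Cardinal.eq.1 (by simpa using aleph0_mul_eq hι)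
  exact ⟨Homeomorph.piCurry.symm.trans (Homeomorph.piCongrLeft (Y := fun _ => X) e)⟩

/-- If `D` is dense in `X^κ` and `X^κ` has a closed discrete subset of size `|D|`,
then there is a dense `E ⊆ X^κ` with `|E| = |D|`, `d(E) = d(D)` (as subspaces),
and `E` a countable union of closed discrete subsets of `X^κ`. -/
theorem exists_sigmaClosedDiscrete_dense_of_closedDiscrete {X : Type u} [TopologicalSpace X]
    [T1Space X] (κ : Cardinal.{u}) (hκ : ℵ₀ ≤ κ)
    (D : Set (κ.out → X)) (hD : Dense D)
    (h : ∃ C : Set (κ.out → X), ClosedDiscrete C ∧ #C = #D) :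
    ∃ E : Set (κ.out → X), Dense E ∧ #E = #D ∧ density ↥E = density ↥D ∧
      ∃ F : ℕ → Set (κ.out → X), (∀ n, ClosedDiscrete (F n)) ∧ E = ⋃ n, F n := by
  rcases D.finite_or_infinite with hfin | hinf
  · exact ⟨D, hD, rfl, rfl, fun _ => D, fun _ => hfin.closedDiscrete, (iUnion_const D).symm⟩
  obtain ⟨C, hC, hCD⟩ := h
  obtain ⟨φ⟩ := nonempty_homeomorph_optionNat_arrow X (mk_out κ ▸ hκ)
  obtain ⟨E, hE, hED, hdE, F, hF, rfl⟩ :=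
    exists_sigmaClosedDiscrete_dense_optionNat_arrow hinf hD hC hCD.ge
  exact ⟨φ '' ⋃ n, F n, φ.isDenseEmbedding.dense_image.2 hE, (mk_image_eq φ.injective).trans hED,
    (φ.image _).density_eq.symm.trans hdE, fun n => φ '' F n,
    fun n => (hF n).image_homeomorph φ, image_iUnion⟩
end

section
/- Let κ be an infinite cardinal and (X_α)_{α<κ} topological spaces. Suppose there is a decreasing sequence (I_n)_{n∈ω} of nonempty subsets of κ with ⋂_{n∈ω} I_n = ∅ such that for every n ∈ ω the product ∏_{α∈I_n} X_α contains a closed discrete subset of cardinality δ_n, where δ_n = d(∏_{α∈κ∖I_n} X_α). Then the product space ∏_{α<κ} X_α is e-separable. -/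
open Cardinal Set

universe u

open Filter Topology Function

/-!
For each `n` split `∏ X_α` as `∏_{α ∈ I n} X_α × ∏_{α ∉ I n} X_α`. A bijection from a closed
discrete set of size `δ n` in the first factor onto a dense set of the second has a closed
discrete graph, because its first coordinates form a closed discrete set and
points of the second factor are closed. A basic open set of `∏ X_α` restricts only finitely many
coordinates; since the `I n` decrease to `∅`, these all lie outside `I n` for some `n`, and then
it meets the `n`-th graph.
-/

theorem exists_dense_card_eq_density (X : Type u) [TopologicalSpace X] :
    ∃ S : Set X, Dense S ∧ #S = density X :=
  csInf_mem (s := {c | ∃ D : Set X, Dense D ∧ #D = c}) ⟨_, univ, dense_univ, rfl⟩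

section ClosedDiscrete

variable {X Y Z : Type*} [TopologicalSpace X] [TopologicalSpace Y] [TopologicalSpace Z]

theorem closedDiscrete_iff_eventually {S : Set X} :
    ClosedDiscrete S ↔ ∀ x, ∀ᶠ y in 𝓝 x, y ∈ S → y = x := by
  simp only [ClosedDiscrete, ← isDiscrete_iff_discreteTopology, isClosed_and_discrete_iff,
    disjoint_principal_right, ← eventually_mem_set, eventually_nhdsWithin_iff, mem_compl_iff,
    mem_singleton_iff, not_imp_not]

theorem ClosedDiscrete.preimage {S : Set Y} (hS : ClosedDiscrete S) {f : X → Y}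
    (hf : Continuous f) (hinj : Injective f) : ClosedDiscrete (f ⁻¹' S) := by
  rw [closedDiscrete_iff_eventually] at hS ⊢
  exact fun x => (hf.tendsto x).eventually (hS (f x)) |>.mono fun _ h hy => hinj (h hy)

theorem ClosedDiscrete.range_graph [T1Space Z] {D : Set Y} (hD : ClosedDiscrete D) (f : D → Z) :
    ClosedDiscrete (range fun d : D => ((d : Y), f d)) := by
  rw [closedDiscrete_iff_eventually] at hD ⊢
  rintro ⟨y, z⟩
  have hfst : ∀ᶠ q : Y × Z in 𝓝 (y, z), q.1 ∈ D → q.1 = y :=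
    continuous_fst.tendsto (y, z) |>.eventually (hD y)
  by_cases hy : y ∈ D
  · by_cases hz : f ⟨y, hy⟩ = z
    · filter_upwards [hfst]
      rintro _ hq ⟨d, rfl⟩
      obtain rfl : d = ⟨y, hy⟩ := Subtype.ext (hq d.2)
      exact Prod.ext rfl hz
    · have hsnd : ∀ᶠ q : Y × Z in 𝓝 (y, z), q.2 ≠ f ⟨y, hy⟩ :=
        continuous_snd.tendsto (y, z) |>.eventually (isOpen_compl_singleton.mem_nhds (Ne.symm hz))
      filter_upwards [hfst, hsnd]
      rintro _ hq hne ⟨d, rfl⟩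
      obtain rfl : d = ⟨y, hy⟩ := Subtype.ext (hq d.2)
      exact absurd rfl hne
  · filter_upwards [hfst]
    rintro _ hq ⟨d, rfl⟩
    exact absurd (hq d.2 ▸ d.2) hy

end ClosedDiscrete

section Pi

variable {ι : Type*} {X : ι → Type u} [∀ a, TopologicalSpace (X a)]

theorem ClosedDiscrete.exists_domRestrict_compl_image_eq [∀ a, T1Space (X a)] {J : Set ι}
    {D : Set (∀ a : J, X a)} (hD : ClosedDiscrete D) {S : Set (∀ a : ↥Jᶜ, X a)} (hS : #S = #D) :
    ∃ T : Set (∀ a, X a), ClosedDiscrete T ∧ Jᶜ.domRestrict '' T = S := by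
  classical
  let e := Homeomorph.piEquivPiSubtypeProd (· ∈ J) X
  obtain ⟨f⟩ := Cardinal.eq.mp hS.symm
  refine ⟨e ⁻¹' range fun d : D => ((d : ∀ a : J, X a), (f d : ∀ a : ↥Jᶜ, X a)),
    (hD.range_graph _).preimage e.continuous e.injective, ?_⟩
  rw [show Jᶜ.domRestrict = Prod.snd ∘ e from rfl, image_comp, e.image_preimage, ← range_comp]
  exact (f.surjective.range_comp Subtype.val).trans Subtype.range_coe

theorem dense_iUnion_of_dense_domRestrict_image {η : Type*} [Nonempty η] {J : η → Set ι}
    (hJ : Directed (· ⊆ ·) J) (hcover : ⋃ n, J n = Set.univ) {T : η → Set (∀ a, X a)}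
    (hT : ∀ n, Dense ((J n).domRestrict '' T n)) : Dense (⋃ n, T n) := by
  rw [dense_iff_inter_open]
  rintro U hU ⟨y, hy⟩
  obtain ⟨F, u, hFu, hsub⟩ := isOpen_pi_iff.mp hU y hy
  obtain ⟨n, hFn⟩ := hJ.exists_mem_subset_of_finset_subset_biUnion (s := F) (by simp [hcover])
  let W : Set (∀ a : J n, X a) := domRestrict₂ hFn ⁻¹' Set.univ.pi fun a => u a
  have hW : IsOpen W := (Pi.continuous_domRestrict₂ hFn).isOpen_preimage _
    (isOpen_set_pi Set.finite_univ fun (a : (F : Set ι)) _ => (hFu a a.2).1)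
  obtain ⟨_, hzW, t, ht, rfl⟩ :=
    (hT n).inter_open_nonempty W hW ⟨(J n).domRestrict y, fun a _ => (hFu a a.2).2⟩
  exact ⟨t, hsub fun a ha => hzW ⟨a, ha⟩ trivial, mem_iUnion_of_mem n ht⟩

end Pi

theorem eSeparable_of_glueing_general (κ : Cardinal.{u})
    (X : κ.out → Type u) [∀ a, TopologicalSpace (X a)] [∀ a, T1Space (X a)]
    (I : ℕ → Set κ.out)
    (hdec : ∀ n, I (n + 1) ⊆ I n)
    (hint : ⋂ n, I n = ∅)
    (hcd : ∀ n, ∃ D : Set (∀ a : ↥(I n), X a.1), ClosedDiscrete D ∧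
      #D = density (∀ a : ↥((I n)ᶜ), X a.1)) :
    ESeparable (∀ a, X a) := by
  choose D hD hDcard using hcd
  choose S hS hScard using fun n => exists_dense_card_eq_density (∀ a : ↥((I n)ᶜ), X a.1)
  choose T hT hTS using fun n =>
    (hD n).exists_domRestrict_compl_image_eq ((hScard n).trans (hDcard n).symm)
  have hmono : Monotone fun n => (I n)ᶜ := fun _ _ h =>
    compl_subset_compl.mpr (antitone_nat_of_succ_le hdec h)
  have hcover : ⋃ n, (I n)ᶜ = Set.univ := by rw [← compl_iInter, hint, compl_empty]
  exact ⟨T, hT, dense_iUnion_of_dense_domRestrict_image hmono.directed_le hcover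
    fun n => hTS n ▸ hS n⟩

/-- If there is a decreasing sequence `(I n)` of nonempty subsets of `κ` with empty
intersection such that `∏_{α ∈ I n} X_α` has a closed discrete subset of
cardinality `d(∏_{α ∈ κ ∖ I n} X_α)` for each `n`, then `∏_{α<κ} X_α` is
`e`-separable. -/
theorem eSeparable_of_glueing (κ : Cardinal.{u}) (hκ : ℵ₀ ≤ κ)
    (X : κ.out → Type u) [∀ a, TopologicalSpace (X a)] [∀ a, T1Space (X a)]
    (I : ℕ → Set κ.out)
    (hdec : ∀ n, I (n + 1) ⊆ I n)
    (hne : ∀ n, (I n).Nonempty)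
    (hint : ⋂ n, I n = ∅)
    (hcd : ∀ n, ∃ D : Set (∀ a : ↥(I n), X a.1), ClosedDiscrete D ∧
      #D = density (∀ a : ↥((I n)ᶜ), X a.1)) :
    ESeparable (∀ a, X a) :=
  eSeparable_of_glueing_general κ X I hdec hint hcd
end
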